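/- arXiv:1709.00620 — 4 statements merged into one kernel-verified Lean document; each statement's English description precedes it below -/
import Mathlib

section
/- Let 1 → N → G → π → H → 1 be an exact sequence of finite groups. Let O(G) = Map(G,k) and O(H) = Map(H,k) be the algebras of k-valued functions, let G act on O(H) by right translations through π (namely (R_g ψ)(h') = ψ(h'π(g))), and form the skew group algebra O(H)*G. Let N act on O(G) by left translations. Then the map ξ : O(H)*G → End_N(O(G)) sending φ ⊗ g to the operator (multiplication by π*φ) ∘ R_g, where R_g is right translation by g on O(G), is an isomorphism of H-equivariant k-algebras; here H acts on O(H)*G by h·(φ ⊗ g) = (L_h φ) ⊗ g via left translations on O(H), and H acts on End_N(O(G)) by conjugating with left translations L_h̃ of O(G) for any lift h̃ ∈ G of h. In particular, the action of O(H)*G on O(G) is faithful. -/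
section Skew

/-- The skew group algebra `A * H` of a group `H` acting on a ring `A` by ring
automorphisms `φ`: formal sums `∑ a_h · h` with multiplication
`(a·h)(a'·h') = (a · φ_h(a'))·(h h')`. -/
structure Skew (A H : Type) [Ring A] [Group H] (φ : H →* RingAut A) where
  toFun : H → A

namespace Skew

set_option linter.unusedSectionVars false

variable {A H : Type} [Ring A] [Group H] [Fintype H] [DecidableEq H] {φ : H →* RingAut A}

@[ext]
lemma ext {f g : Skew A H φ} (h : ∀ x, f.toFun x = g.toFun x) : f = g := by
  cases f; cases g; simp only [mk.injEq]; funext x; exact h x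

/-- The underlying-function equivalence. -/
def equivFun : Skew A H φ ≃ (H → A) where
  toFun := toFun
  invFun := mk
  left_inv _ := rfl
  right_inv _ := rfl

instance : AddCommGroup (Skew A H φ) := equivFun.addCommGroup

@[simp] lemma add_toFun (f g : Skew A H φ) (x : H) :
    (f + g).toFun x = f.toFun x + g.toFun x := rfl

@[simp] lemma zero_toFun (x : H) : (0 : Skew A H φ).toFun x = 0 := rfl

instance : Mul (Skew A H φ) :=
  ⟨fun f g => ⟨fun x => ∑ u : H, f.toFun u * φ u (g.toFun (u⁻¹ * x))⟩⟩

instance : One (Skew A H φ) := ⟨⟨fun x => if x = 1 then 1 else 0⟩⟩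

@[simp] lemma mul_toFun (f g : Skew A H φ) (x : H) :
    (f * g).toFun x = ∑ u : H, f.toFun u * φ u (g.toFun (u⁻¹ * x)) := rfl

@[simp] lemma one_toFun (x : H) :
    (1 : Skew A H φ).toFun x = if x = 1 then 1 else 0 := rfl

instance instRing : Ring (Skew A H φ) where
  __ := (inferInstance : AddCommGroup (Skew A H φ))
  mul_assoc f g h := by
    ext x
    show (∑ u : H, (f * g).toFun u * φ u (h.toFun (u⁻¹ * x)))
        = ∑ w : H, f.toFun w * φ w ((g * h).toFun (w⁻¹ * x))
    simp only [mul_toFun, Finset.sum_mul, map_sum, Finset.mul_sum]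
    rw [Finset.sum_comm]
    refine Finset.sum_congr rfl fun w _ => ?_
    refine (Fintype.sum_equiv (Equiv.mulLeft w) _ _ fun v => ?_).symm
    simp only [Equiv.coe_mulLeft]
    have e1 : w⁻¹ * (w * v) = v := by group
    have e2 : (w * v)⁻¹ * x = v⁻¹ * (w⁻¹ * x) := by group
    have e3 : φ (w * v) (h.toFun (v⁻¹ * (w⁻¹ * x)))
        = φ w (φ v (h.toFun (v⁻¹ * (w⁻¹ * x)))) := by
      rw [map_mul φ w v]; rfl
    rw [e1, e2, map_mul (φ w), e3, mul_assoc]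
  one_mul f := by
    ext x
    rw [mul_toFun, Finset.sum_eq_single_of_mem 1 (Finset.mem_univ 1)]
    · have h1 : (1 : RingAut A) (f.toFun x) = f.toFun x := rfl
      simp [h1]
    · intro u _ hu
      simp [one_toFun, hu]
  mul_one f := by
    ext x
    rw [mul_toFun, Finset.sum_eq_single_of_mem x (Finset.mem_univ x)]
    · simp
    · intro u _ hu
      have h1 : ¬(u⁻¹ * x = 1) := fun hh => hu (by
        rw [inv_mul_eq_one] at hh; exact hh)
      simp [one_toFun, h1]
  left_distrib f g h := by
    ext x
    simp [mul_add, Finset.sum_add_distrib]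
  right_distrib f g h := by
    ext x
    simp [add_mul, Finset.sum_add_distrib]
  zero_mul f := by
    ext x
    simp
  mul_zero f := by
    ext x
    simp

end Skew
end Skew

section Stmt7

variable (k : Type) [Field k] {G H : Type} [Group G] [Group H]

/-- Right translation by an element of `H` on the function algebra `O(H) = Map(H, k)`,
as a ring automorphism. -/
def rightTransAut (h : H) : RingAut (H → k) where
  toFun ψ := fun h' => ψ (h' * h)
  invFun ψ := fun h' => ψ (h' * h⁻¹)
  left_inv ψ := by funext h'; simp
  right_inv ψ := by funext h'; simp
  map_add' ψ ψ' := rfl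
  map_mul' ψ ψ' := rfl

/-- The action of `G` on `O(H)` by right translations through `π`. -/
def rightTransG (π : G →* H) : G →* RingAut (H → k) where
  toFun g := rightTransAut k (π g)
  map_one' := by
    ext ψ h'
    show ψ (h' * π 1) = _
    rw [map_one, mul_one]
    rfl
  map_mul' g g' := by
    ext ψ h'
    show ψ (h' * π (g * g')) = ψ (h' * π g * π g')
    rw [map_mul, mul_assoc]

/-- Left translation by `g ∈ G` on `O(G) = Map(G, k)`, as a `k`-linear endomorphism. -/
def ltrans (g : G) : Module.End k (G → k) where
  toFun ψ := fun g' => ψ (g⁻¹ * g')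
  map_add' ψ ψ' := rfl
  map_smul' c ψ := rfl

/-- The endomorphism algebra `End_N(O(G))`: `k`-linear endomorphisms of `O(G)` commuting
with the left translations by elements of `N`. -/
def EndNO (π : G →* H) : Subalgebra k (Module.End k (G → k)) :=
  Subalgebra.centralizer k (Set.range fun n : π.ker => ltrans k (n : G))

/-- The operator `(multiplication by π*φ) ∘ R_g` on `O(G)`. -/
def TOp (π : G →* H) (φ : H → k) (g : G) : Module.End k (G → k) where
  toFun ψ := fun x => φ (π x) * ψ (x * g)
  map_add' ψ ψ' := by
    funext x
    simp [mul_add]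
  map_smul' c ψ := by
    funext x
    simp only [Pi.smul_apply, smul_eq_mul, RingHom.id_apply]
    ring

variable [Fintype G] [DecidableEq G]

/-- The map `ξ : O(H)*G → End_N(O(G))`, sending `φ ⊗ g` to
`(multiplication by π*φ) ∘ R_g`. -/
noncomputable def xiMap (π : G →* H) :
    Skew (H → k) G (rightTransG k π) → Module.End k (G → k) :=
  fun f => ∑ g : G, TOp k π (f.toFun g) g

/-- The action of `H` on `O(H)*G` by left translations on the coefficients, transported
through a lift `gg ∈ G` of `h ∈ H`. -/
def lSkew (π : G →* H) (gg : G) (f : Skew (H → k) G (rightTransG k π)) :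
    Skew (H → k) G (rightTransG k π) :=
  ⟨fun g => fun h' => f.toFun g ((π gg)⁻¹ * h')⟩

section AuxLemmas

set_option linter.unusedSectionVars false

/-- The delta function at a point. -/
def delta {G : Type} [DecidableEq G] (a : G) : G → k := fun j => if j = a then 1 else 0

lemma rightTransG_apply (π : G →* H) (u : G) (χ : H → k) (h : H) :
    rightTransG k π u χ h = χ (h * π u) := rfl

lemma ltrans_apply (g : G) (ψ : G → k) (x : G) : ltrans k g ψ x = ψ (g⁻¹ * x) := rfl

lemma TOp_apply (π : G →* H) (φ : H → k) (g : G) (ψ : G → k) (x : G) :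
    TOp k π φ g ψ x = φ (π x) * ψ (x * g) := rfl

lemma xiMap_apply (π : G →* H) (f : Skew (H → k) G (rightTransG k π)) (ψ : G → k) (x : G) :
    xiMap k π f ψ x = ∑ g : G, f.toFun g (π x) * ψ (x * g) := by
  unfold xiMap
  rw [LinearMap.sum_apply, Finset.sum_apply]
  rfl

lemma sum_delta (ψ : G → k) : ψ = ∑ a : G, ψ a • delta k a := by
  funext j
  rw [Finset.sum_apply]
  simp [delta, mul_ite]

lemma xiMap_delta (π : G →* H) (f : Skew (H → k) G (rightTransG k π)) (x g : G) :
    xiMap k π f (delta k (x * g)) x = f.toFun g (π x) := by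
  rw [xiMap_apply, Finset.sum_eq_single g]
  · simp [delta]
  · intro u _ hu
    have h1 : ¬(x * u = x * g) := fun hh => hu (mul_left_cancel hh)
    simp [delta, h1]
  · simp

lemma ltrans_delta (n a : G) : ltrans k n (delta k a) = delta k (n * a) := by
  funext j
  simp only [ltrans_apply, delta, inv_mul_eq_iff_eq_mul]

lemma T_delta_eq (π : G →* H) (T : Module.End k (G → k)) (hT : T ∈ EndNO k π)
    {x x' : G} (hx : π x = π x') (g : G) :
    T (delta k (x' * g)) x' = T (delta k (x * g)) x := by
  have hn : x' * x⁻¹ ∈ π.ker := by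
    rw [MonoidHom.mem_ker, map_mul, map_inv, hx]
    simp
  have hcomm := (Subalgebra.mem_centralizer_iff k).mp hT
    (ltrans k ((⟨x' * x⁻¹, hn⟩ : π.ker) : G)) ⟨⟨x' * x⁻¹, hn⟩, rfl⟩
  have h1 : delta k (x' * g) = ltrans k (x' * x⁻¹) (delta k (x * g)) := by
    rw [ltrans_delta]
    congr 1
    group
  rw [h1]
  calc T (ltrans k (x' * x⁻¹) (delta k (x * g))) x'
      = (T * ltrans k (x' * x⁻¹)) (delta k (x * g)) x' := rfl
    _ = (ltrans k (x' * x⁻¹) * T) (delta k (x * g)) x' := by rw [hcomm]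
    _ = T (delta k (x * g)) ((x' * x⁻¹)⁻¹ * x') := rfl
    _ = T (delta k (x * g)) x := by congr 1; group

lemma ltrans_mul_TOp (π : G →* H) (gg : G) (φ : H → k) (g : G) :
    ltrans k gg * TOp k π φ g = TOp k π (fun h => φ ((π gg)⁻¹ * h)) g * ltrans k gg := by
  apply LinearMap.ext; intro ψ; funext x
  show TOp k π φ g ψ (gg⁻¹ * x) = ((π gg)⁻¹ * π x |> φ) * ltrans k gg ψ (x * g)
  rw [TOp_apply, ltrans_apply, map_mul, map_inv, mul_assoc]

end AuxLemmas

/-- For an exact sequence `1 → N → G → H → 1` of finite groups, the map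
`ξ : O(H)*G → End_N(O(G))`, `φ ⊗ g ↦ (mult by π*φ) ∘ R_g`, is an isomorphism of
`H`-equivariant algebras; in particular the action of `O(H)*G` on `O(G)` is faithful. -/
theorem stmt_7 (k : Type) [Field k] [CharZero k]
    (G H : Type) [Group G] [Group H] [Fintype G] [Fintype H] [DecidableEq G]
    (π : G →* H) (hπ : Function.Surjective π) :
    -- ξ is a homomorphism of rings
    (xiMap k π (1 : Skew (H → k) G (rightTransG k π)) = 1) ∧
    (∀ f f' : Skew (H → k) G (rightTransG k π),
      xiMap k π (f + f') = xiMap k π f + xiMap k π f') ∧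
    (∀ f f' : Skew (H → k) G (rightTransG k π),
      xiMap k π (f * f') = xiMap k π f * xiMap k π f') ∧
    -- ξ lands in, and is bijective onto, End_N(O(G)); injectivity means in particular
    -- that the action of O(H)*G on O(G) is faithful
    (Set.range (xiMap k π) = (EndNO k π : Set (Module.End k (G → k)))) ∧
    Function.Injective (xiMap k π) ∧
    -- ξ is H-equivariant: conjugation by left translations corresponds to the
    -- H-action on O(H)*G through any lift
    (∀ (gg : G) (f : Skew (H → k) G (rightTransG k π)),
      ltrans k gg * xiMap k π f = xiMap k π (lSkew k π gg f) * ltrans k gg) := by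
  refine ⟨?_, ?_, ?_, ?_, ?_, ?_⟩
  · -- ξ 1 = 1
    apply LinearMap.ext; intro ψ; funext x
    rw [xiMap_apply, Finset.sum_eq_single 1]
    · simp [Skew.one_toFun]
    · intro u _ hu
      simp [Skew.one_toFun, hu]
    · simp
  · -- additivity
    intro f f'
    apply LinearMap.ext; intro ψ; funext x
    rw [LinearMap.add_apply, Pi.add_apply, xiMap_apply, xiMap_apply, xiMap_apply,
      ← Finset.sum_add_distrib]
    refine Finset.sum_congr rfl fun g _ => ?_
    rw [Skew.add_toFun, Pi.add_apply, add_mul]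
  · -- multiplicativity
    intro f f'
    apply LinearMap.ext; intro ψ; funext x
    rw [Module.End.mul_apply, xiMap_apply, xiMap_apply]
    simp only [Skew.mul_toFun, Finset.sum_apply, Pi.mul_apply, rightTransG_apply,
      Finset.sum_mul, Finset.mul_sum, xiMap_apply]
    rw [Finset.sum_comm]
    refine Finset.sum_congr rfl fun u _ => ?_
    refine Fintype.sum_equiv (Equiv.mulLeft u⁻¹) _ _ fun v => ?_
    simp only [Equiv.coe_mulLeft]
    have e2 : x * u * (u⁻¹ * v) = x * v := by group
    rw [map_mul, e2, mul_assoc]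
  · -- range = EndNO
    apply Set.eq_of_subset_of_subset
    · rintro _ ⟨f, rfl⟩
      rw [SetLike.mem_coe]
      show _ ∈ EndNO k π
      rw [EndNO, Subalgebra.mem_centralizer_iff]
      rintro _ ⟨n, rfl⟩
      have hn : π (n : G) = 1 := n.2
      apply LinearMap.ext; intro ψ; funext x
      show xiMap k π f ψ ((n : G)⁻¹ * x) = xiMap k π f (ltrans k (n : G) ψ) x
      rw [xiMap_apply, xiMap_apply]
      refine Finset.sum_congr rfl fun g _ => ?_
      have hπn : π ((n : G)⁻¹ * x) = π x := by
        rw [map_mul, map_inv, hn]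
        simp
      rw [hπn, ltrans_apply, mul_assoc]
    · intro T hT
      rw [SetLike.mem_coe] at hT
      refine ⟨⟨fun g h => T (delta k (Function.surjInv hπ h * g)) (Function.surjInv hπ h)⟩, ?_⟩
      apply LinearMap.ext; intro ψ; funext x
      rw [xiMap_apply]
      have step1 : ∀ g : G,
          T (delta k (Function.surjInv hπ (π x) * g)) (Function.surjInv hπ (π x))
            = T (delta k (x * g)) x :=
        fun g => T_delta_eq k π T hT (Function.surjInv_eq hπ (π x)).symm g
      have expand : T ψ x = ∑ a : G, ψ a * T (delta k a) x := by
        conv_lhs => rw [sum_delta k ψ]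
        rw [map_sum, Finset.sum_apply]
        refine Finset.sum_congr rfl fun a _ => ?_
        rw [map_smul]
        rfl
      rw [expand]
      refine Fintype.sum_equiv (Equiv.mulLeft x) _ _ fun g => ?_
      simp only [Equiv.coe_mulLeft]
      show T (delta k (Function.surjInv hπ (π x) * g)) (Function.surjInv hπ (π x)) * ψ (x * g)
          = ψ (x * g) * T (delta k (x * g)) x
      rw [step1, mul_comm]
  · -- injectivity
    intro f f' hff
    ext g h
    obtain ⟨x, rfl⟩ := hπ h
    have h1 := congrFun (congrArg (fun T : Module.End k (G → k) => T (delta k (x * g))) hff) x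
    simpa only [xiMap_delta] using h1
  · -- H-equivariance
    intro gg f
    unfold xiMap
    rw [Finset.mul_sum, Finset.sum_mul]
    refine Finset.sum_congr rfl fun g _ => ?_
    exact ltrans_mul_TOp k π gg (f.toFun g) g

end Stmt7
end

section
/- Let n ≥ 1, let G be the Heisenberg group over ℤ/nℤ, i.e. the group of triples (a,b,c) ∈ (ℤ/nℤ)³ with multiplication (a,b,c)(a',b',c') = (a+a', b+b', c+c'+ab'), and let N = {(0,0,c)} ≅ ℤ/nℤ be its center. Suppose k contains a primitive n-th root of unity ζ, and let χ : N → k* be the character sending (0,0,1) to ζ. Then there exists an irreducible finite-dimensional k-representation V_ζ of G of dimension n on which N acts by the character χ; any two irreducible finite-dimensional k-representations of G on which N acts by χ are isomorphic; and every finite-dimensional k-representation of G whose restriction to N is χ-isotypic admits a nonzero G-equivariant morphism from V_ζ. -/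
/-- The Heisenberg group over `ℤ/nℤ`: triples `(a, b, c)` with multiplication
`(a,b,c)(a',b',c') = (a+a', b+b', c+c'+ab')`. -/
@[ext]
structure Heis (n : ℕ) where
  a : ZMod n
  b : ZMod n
  c : ZMod n

namespace Heis

variable {n : ℕ}

instance : Mul (Heis n) :=
  ⟨fun x y => ⟨x.a + y.a, x.b + y.b, x.c + y.c + x.a * y.b⟩⟩

instance : One (Heis n) := ⟨⟨0, 0, 0⟩⟩

instance : Inv (Heis n) :=
  ⟨fun x => ⟨-x.a, -x.b, -x.c + x.a * x.b⟩⟩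

@[simp] lemma mul_a (x y : Heis n) : (x * y).a = x.a + y.a := rfl
@[simp] lemma mul_b (x y : Heis n) : (x * y).b = x.b + y.b := rfl
@[simp] lemma mul_c (x y : Heis n) : (x * y).c = x.c + y.c + x.a * y.b := rfl
@[simp] lemma one_a : (1 : Heis n).a = 0 := rfl
@[simp] lemma one_b : (1 : Heis n).b = 0 := rfl
@[simp] lemma one_c : (1 : Heis n).c = 0 := rfl
@[simp] lemma inv_a (x : Heis n) : x⁻¹.a = -x.a := rfl
@[simp] lemma inv_b (x : Heis n) : x⁻¹.b = -x.b := rfl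
@[simp] lemma inv_c (x : Heis n) : x⁻¹.c = -x.c + x.a * x.b := rfl

instance instGroup : Group (Heis n) where
  mul_assoc x y z := by ext <;> simp <;> ring
  one_mul x := by ext <;> simp
  mul_one x := by ext <;> simp
  inv_mul_cancel x := by ext <;> simp

end Heis

/-- Irreducibility of a representation: the space is nonzero and has no nontrivial
invariant subspace. -/
def IrredRep {k G V : Type} [CommRing k] [Monoid G] [AddCommGroup V] [Module k V]
    (ρ : Representation k G V) : Prop :=
  Nontrivial V ∧ ∀ p : Submodule k V, (∀ g : G, ∀ v ∈ p, ρ g v ∈ p) → p = ⊥ ∨ p = ⊤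

/-!
Let `ψ` be the additive character `x ↦ ζ ^ x` of `ZMod n`. The model `V_ζ` is the Schrödinger
representation on `ZMod n → k`, `(g • φ) x = ψ (c + b x) φ (x + a)`. It is irreducible: the
Fourier averages over the elements `(0, y, 0)` cut out the delta functions from any nonzero
vector, and the translations `(t, 0, 0)` permute the delta functions transitively.

The model is induced from the character `(0, b, c) ↦ ψ c` of the abelian subgroup
`{(0, b, c)}`, so a representation `W` on which the centre acts by `ψ` receives a nonzero
intertwiner from it as soon as some nonzero vector of `W` is fixed by every `(0, y, 0)`. Such a
vector is the average over the `(0, y, 0)` of a suitable translate of any nonzero `u`: conjugating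
these averages by the `(m, 0, 0)` and summing over `m` gives `n • u`, by orthogonality of
characters (`n` is invertible in `k` since `k` contains a primitive `n`-th root of unity).
Schur's lemma turns this intertwiner into an isomorphism when `W` is irreducible.
-/

namespace IrredRep

variable {k G V W : Type} [CommRing k] [Monoid G] [AddCommGroup V] [Module k V]
  [AddCommGroup W] [Module k W] {ρ : Representation k G V} {σ : Representation k G W}

lemma injective_of_ne_zero (hρ : IrredRep ρ) {f : ρ.IntertwiningMap σ} (hf : f ≠ 0) :
    Function.Injective f := by
  have hker : LinearMap.ker f.toLinearMap ≠ ⊤ := fun h =>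
    hf (Representation.IntertwiningMap.ext (LinearMap.ker_eq_top.mp h))
  refine LinearMap.ker_eq_bot.mp ((hρ.2 _ fun g v hv => ?_).resolve_right hker)
  simp_all [LinearMap.mem_ker, Representation.IntertwiningMap.isIntertwining _ _ f g v]

lemma surjective_of_ne_zero (hσ : IrredRep σ) {f : ρ.IntertwiningMap σ} (hf : f ≠ 0) :
    Function.Surjective f := by
  have hrange : LinearMap.range f.toLinearMap ≠ ⊥ := fun h =>
    hf (Representation.IntertwiningMap.ext (LinearMap.range_eq_bot.mp h))
  refine LinearMap.range_eq_top.mp ((hσ.2 _ fun g w hw => ?_).resolve_left hrange)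
  obtain ⟨v, rfl⟩ := hw
  exact ⟨ρ g v, Representation.IntertwiningMap.isIntertwining _ _ f g v⟩

lemma nonempty_equiv_of_ne_zero (hρ : IrredRep ρ) (hσ : IrredRep σ) {f : ρ.IntertwiningMap σ}
    (hf : f ≠ 0) : Nonempty (ρ.Equiv σ) :=
  ⟨.mk (.ofBijective f.toLinearMap ⟨hρ.injective_of_ne_zero hf, hσ.surjective_of_ne_zero hf⟩)
    f.isIntertwining'⟩

end IrredRep

namespace Heis

open AddChar

variable {k W : Type} {n : ℕ}

@[simp] lemma mk_zero_zero_zero : (⟨0, 0, 0⟩ : Heis n) = 1 := rfl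

section CommRing

variable [CommRing k] [AddCommGroup W] [Module k W]

def schrodinger (ψ : AddChar (ZMod n) k) : Representation k (Heis n) (ZMod n → k) where
  toFun g :=
    { toFun φ x := ψ (g.c + g.b * x) * φ (x + g.a)
      map_add' φ φ' := by ext x; simp [mul_add]
      map_smul' r φ := by ext x; simp [mul_left_comm] }
  map_one' := by ext φ x; simp
  map_mul' g h := by
    ext φ x
    simp only [LinearMap.coe_mk, AddHom.coe_mk, Module.End.mul_apply, mul_a, mul_b, mul_c,
      ← mul_assoc, ← map_add_eq_mul]
    congr 2 <;> ring

@[simp] lemma schrodinger_apply (ψ : AddChar (ZMod n) k) (g : Heis n) (φ : ZMod n → k)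
    (x : ZMod n) : schrodinger ψ g φ x = ψ (g.c + g.b * x) * φ (x + g.a) := rfl

def HasCentralChar (σ : Representation k (Heis n) W) (ψ : AddChar (ZMod n) k) : Prop :=
  ∀ c, σ ⟨0, 0, c⟩ = ψ c • LinearMap.id

lemma hasCentralChar_schrodinger (ψ : AddChar (ZMod n) k) :
    HasCentralChar (schrodinger ψ) ψ := by
  intro c
  ext φ x
  simp

lemma hasCentralChar_zmodChar [NeZero n] {σ : Representation k (Heis n) W} {ζ : k}
    (hζ : ζ ^ n = 1) (h : σ ⟨0, 0, 1⟩ = ζ • LinearMap.id) :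
    HasCentralChar σ (zmodChar n hζ) := by
  have hpow : ∀ m : ℕ, σ ⟨0, 0, m⟩ = ζ ^ m • LinearMap.id := by
    intro m
    induction m with
    | zero => rw [Nat.cast_zero, pow_zero, one_smul]; exact map_one σ
    | succ m ih =>
      have hsplit : (⟨0, 0, ((m + 1 : ℕ) : ZMod n)⟩ : Heis n) = ⟨0, 0, m⟩ * ⟨0, 0, 1⟩ := by
        ext <;> simp
      rw [hsplit, map_mul, ih, h]
      ext w
      simp [pow_succ', smul_smul]
  intro c
  rw [zmodChar_apply, ← hpow, ZMod.natCast_zmod_val]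

lemma schrodinger_translate_single (ψ : AddChar (ZMod n) k) (t x : ZMod n) (c : k) :
    schrodinger ψ ⟨t, 0, 0⟩ (Pi.single x c) = Pi.single (x - t) c := by
  ext y
  simp [Pi.single_apply, eq_sub_iff_add_eq]

lemma exists_intertwiningMap_single_eq [NeZero n] {ψ : AddChar (ZMod n) k}
    {σ : Representation k (Heis n) W} (hσ : HasCentralChar σ ψ) {v : W}
    (hv : ∀ y, σ ⟨0, y, 0⟩ v = v) :
    ∃ f : (schrodinger ψ).IntertwiningMap σ, f (Pi.single 0 1) = v := by
  have hact : ∀ g x,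
      σ g (σ ⟨-x, 0, 0⟩ v) = ψ (g.c + g.b * (x - g.a)) • σ ⟨-(x - g.a), 0, 0⟩ v := by
    intro g x
    have hgrp : g * ⟨-x, 0, 0⟩
        = ⟨0, 0, g.c + g.b * (x - g.a)⟩ * ⟨-(x - g.a), 0, 0⟩ * ⟨0, g.b, 0⟩ := by
      ext <;> simp <;> ring
    rw [← Module.End.mul_apply, ← map_mul, hgrp, map_mul, map_mul, Module.End.mul_apply,
      Module.End.mul_apply, hv, hσ]
    rfl
  refine ⟨LinearMap.intertwiningMap_of_isIntertwiningMap _ _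
    (Fintype.linearCombination k fun x => σ ⟨-x, 0, 0⟩ v) fun g φ => ?_, ?_⟩
  · simp only [Fintype.linearCombination_apply, map_sum, map_smul, hact, smul_smul,
      schrodinger_apply]
    exact Fintype.sum_equiv (Equiv.addRight g.a) _ _ fun x => by simp [mul_comm]
  · simp [LinearMap.intertwiningMap_of_isIntertwiningMap, Fintype.linearCombination_apply_single]

end CommRing

section Domain

variable [CommRing k] [IsDomain k] [NeZero n] [AddCommGroup W] [Module k W]
  {ψ : AddChar (ZMod n) k}

lemma sum_smul_schrodinger_eq_single (hψ : ψ.IsPrimitive) (φ : ZMod n → k) (x₀ : ZMod n) :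
    ∑ y, ψ (-(y * x₀)) • schrodinger ψ ⟨0, y, 0⟩ φ = Pi.single x₀ ((n : k) * φ x₀) := by
  ext x
  have hchar : ∀ y, ψ (-(y * x₀)) * ψ (0 + y * x) = ψ (y * (x - x₀)) := by
    intro y
    rw [← map_add_eq_mul]
    ring_nf
  simp only [Finset.sum_apply, Pi.smul_apply, smul_eq_mul, schrodinger_apply, add_zero,
    ← mul_assoc, hchar, ← Finset.sum_mul, sum_mulShift _ hψ, sub_eq_zero, ZMod.card]
  by_cases hx : x = x₀ <;> simp [hx]

lemma sum_conj_average (hψ : ψ.IsPrimitive) {σ : Representation k (Heis n) W}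
    (hσ : HasCentralChar σ ψ) (u : W) :
    ∑ m, σ ⟨-m, 0, 0⟩ (∑ y, σ ⟨0, y, 0⟩ (σ ⟨m, 0, 0⟩ u)) = (n : k) • u := by
  have hconj : ∀ m y, σ ⟨-m, 0, 0⟩ (σ ⟨0, y, 0⟩ (σ ⟨m, 0, 0⟩ u))
      = ψ (m * -y) • σ ⟨0, y, 0⟩ u := by
    intro m y
    have hgrp : (⟨-m, 0, 0⟩ : Heis n) * ⟨0, y, 0⟩ * ⟨m, 0, 0⟩
        = ⟨0, 0, m * -y⟩ * ⟨0, y, 0⟩ := by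
      ext <;> simp
    rw [← Module.End.mul_apply, ← Module.End.mul_apply, ← map_mul, ← map_mul, hgrp, map_mul,
      hσ]
    rfl
  simp_rw [map_sum, hconj]
  rw [Finset.sum_comm]
  simp_rw [← Finset.sum_smul, sum_mulShift _ hψ]
  simp

lemma exists_ne_zero_fixed [NeZero (n : k)] [Nontrivial W] [NoZeroSMulDivisors k W]
    (hψ : ψ.IsPrimitive) {σ : Representation k (Heis n) W} (hσ : HasCentralChar σ ψ) :
    ∃ v : W, v ≠ 0 ∧ ∀ y, σ ⟨0, y, 0⟩ v = v := by
  obtain ⟨u, hu⟩ := exists_ne (0 : W)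
  have hnu : ∑ m, σ ⟨-m, 0, 0⟩ (∑ y, σ ⟨0, y, 0⟩ (σ ⟨m, 0, 0⟩ u)) ≠ 0 := by
    rw [sum_conj_average hψ hσ]
    exact smul_ne_zero (NeZero.ne _) hu
  obtain ⟨m, -, hm⟩ := Finset.exists_ne_zero_of_sum_ne_zero hnu
  refine ⟨∑ y, σ ⟨0, y, 0⟩ (σ ⟨m, 0, 0⟩ u), fun h => hm (by rw [h, map_zero]), fun y => ?_⟩
  rw [map_sum]
  refine Fintype.sum_equiv (Equiv.addLeft y) _ _ fun y' => ?_
  rw [← Module.End.mul_apply, ← map_mul]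
  congr 2
  ext <;> simp

end Domain

section Field

variable [Field k] [NeZero n] [NeZero (n : k)] [AddCommGroup W] [Module k W]
  {ψ : AddChar (ZMod n) k}

lemma irredRep_schrodinger (hψ : ψ.IsPrimitive) : IrredRep (schrodinger ψ) := by
  refine ⟨inferInstance, fun p hp => or_iff_not_imp_left.2 fun hp0 => ?_⟩
  obtain ⟨φ, hφp, hφ0⟩ := Submodule.exists_mem_ne_zero_of_ne_bot hp0
  obtain ⟨x₀, hx₀⟩ := Function.ne_iff.1 hφ0
  have hc : (n : k) * φ x₀ ≠ 0 := mul_ne_zero (NeZero.ne _) hx₀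
  have hsingle₀ : Pi.single x₀ ((n : k) * φ x₀) ∈ p := by
    rw [← sum_smul_schrodinger_eq_single hψ]
    exact p.sum_mem fun y _ => p.smul_mem _ (hp _ _ hφp)
  rw [eq_top_iff, ← (Pi.basisFun k (ZMod n)).span_eq, Submodule.span_le]
  rintro _ ⟨x, rfl⟩
  rw [SetLike.mem_coe, Pi.basisFun_apply]
  have hsingle := p.smul_mem ((n : k) * φ x₀)⁻¹ (hp ⟨x₀ - x, 0, 0⟩ _ hsingle₀)
  rwa [schrodinger_translate_single, sub_sub_cancel, ← Pi.single_smul', smul_eq_mul,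
    inv_mul_cancel₀ hc] at hsingle

lemma exists_intertwiningMap_schrodinger_ne_zero [Nontrivial W] (hψ : ψ.IsPrimitive)
    {σ : Representation k (Heis n) W} (hσ : HasCentralChar σ ψ) :
    ∃ f : (schrodinger ψ).IntertwiningMap σ, f ≠ 0 := by
  obtain ⟨v, hv0, hv⟩ := exists_ne_zero_fixed hψ hσ
  obtain ⟨f, hf⟩ := exists_intertwiningMap_single_eq hσ hv
  exact ⟨f, fun h => hv0 (by rw [← hf, h]; rfl)⟩

end Field

end Heis

theorem stmt_8_general (k : Type) [Field k] (n : ℕ) (hn : 0 < n)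
    (ζ : k) (hζ : IsPrimitiveRoot ζ n) :
    (∃ V : FDRep k (Heis n),
      IrredRep V.ρ ∧ Module.finrank k ↥V = n ∧
        V.ρ ⟨0, 0, 1⟩ = ζ • LinearMap.id) ∧
    (∀ V W : FDRep k (Heis n),
      IrredRep V.ρ → V.ρ ⟨0, 0, 1⟩ = ζ • LinearMap.id →
      IrredRep W.ρ → W.ρ ⟨0, 0, 1⟩ = ζ • LinearMap.id →
      ∃ e : ↥V ≃ₗ[k] ↥W, ∀ (g : Heis n) (v : ↥V), e (V.ρ g v) = W.ρ g (e v)) ∧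
    (∀ V W : FDRep k (Heis n),
      IrredRep V.ρ → V.ρ ⟨0, 0, 1⟩ = ζ • LinearMap.id →
      Nontrivial ↥W → W.ρ ⟨0, 0, 1⟩ = ζ • LinearMap.id →
      ∃ f : ↥V →ₗ[k] ↥W, f ≠ 0 ∧ ∀ (g : Heis n) (v : ↥V), f (V.ρ g v) = W.ρ g (f v)) := by
  have : NeZero n := ⟨hn.ne'⟩
  have := hζ.neZero'
  set ψ := AddChar.zmodChar n hζ.pow_eq_one
  have hψ : ψ.IsPrimitive := AddChar.zmodChar_primitive_of_primitive_root n hζ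
  have hmodel : IrredRep (Heis.schrodinger ψ) := Heis.irredRep_schrodinger hψ
  have hequiv (V : FDRep k (Heis n)) (hV : IrredRep V.ρ)
      (hVc : V.ρ ⟨0, 0, 1⟩ = ζ • LinearMap.id) : Nonempty ((Heis.schrodinger ψ).Equiv V.ρ) :=
    have := hV.1
    have ⟨f, hf⟩ := Heis.exists_intertwiningMap_schrodinger_ne_zero hψ
      (Heis.hasCentralChar_zmodChar _ hVc)
    hmodel.nonempty_equiv_of_ne_zero hV hf
  refine ⟨⟨FDRep.of (Heis.schrodinger ψ), hmodel, by simp, ?_⟩, fun V W hV hVc hW hWc => ?_,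
    fun V W hV hVc hWnt hWc => ?_⟩
  · have h1 := Heis.hasCentralChar_schrodinger ψ ((1 : ℕ) : ZMod n)
    rwa [AddChar.zmodChar_apply', pow_one, Nat.cast_one] at h1
  · obtain ⟨e₁⟩ := hequiv V hV hVc
    obtain ⟨e₂⟩ := hequiv W hW hWc
    exact ⟨(e₁.symm.trans e₂).toLinearEquiv, (e₁.symm.trans e₂).isIntertwining _ _⟩
  · obtain ⟨e⟩ := hequiv V hV hVc
    obtain ⟨f, hf⟩ := Heis.exists_intertwiningMap_schrodinger_ne_zero hψ
      (Heis.hasCentralChar_zmodChar _ hWc)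
    refine ⟨(f.comp e.symm.toIntertwiningMap).toLinearMap, fun h => hf ?_,
      (f.comp e.symm.toIntertwiningMap).isIntertwining _ _⟩
    refine Representation.IntertwiningMap.ext (LinearMap.ext fun φ => ?_)
    simpa using congr($h (e φ))

/-- Let `G` be the Heisenberg group over `ℤ/nℤ` with centre
`N = {(0,0,c)} ≅ ℤ/nℤ`, let `ζ ∈ k` be a primitive `n`-th root of unity, and let
`χ : N → k*` send `(0,0,1)` to `ζ`.  Then there exists an irreducible `n`-dimensional
representation `V_ζ` of `G` on which `N` acts by `χ`; any two irreducible finite-dimensional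
representations of `G` on which `N` acts by `χ` are isomorphic; and every nonzero
finite-dimensional representation of `G` whose restriction to `N` is `χ`-isotypic admits a
nonzero `G`-equivariant morphism from `V_ζ`. -/
theorem stmt_8 (k : Type) [Field k] [CharZero k] (n : ℕ) (hn : 0 < n)
    (ζ : k) (hζ : IsPrimitiveRoot ζ n) :
    (∃ V : FDRep k (Heis n),
      IrredRep V.ρ ∧ Module.finrank k ↥V = n ∧
        V.ρ ⟨0, 0, 1⟩ = ζ • LinearMap.id) ∧
    (∀ V W : FDRep k (Heis n),
      IrredRep V.ρ → V.ρ ⟨0, 0, 1⟩ = ζ • LinearMap.id →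
      IrredRep W.ρ → W.ρ ⟨0, 0, 1⟩ = ζ • LinearMap.id →
      ∃ e : ↥V ≃ₗ[k] ↥W, ∀ (g : Heis n) (v : ↥V), e (V.ρ g v) = W.ρ g (e v)) ∧
    (∀ V W : FDRep k (Heis n),
      IrredRep V.ρ → V.ρ ⟨0, 0, 1⟩ = ζ • LinearMap.id →
      Nontrivial ↥W → W.ρ ⟨0, 0, 1⟩ = ζ • LinearMap.id →
      ∃ f : ↥V →ₗ[k] ↥W, f ≠ 0 ∧ ∀ (g : Heis n) (v : ↥V), f (V.ρ g v) = W.ρ g (f v)) :=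
  stmt_8_general k n hn ζ hζ
end

section
/- Let n ≥ 1, let G be the Heisenberg group over ℤ/nℤ (triples (a,b,c) ∈ (ℤ/nℤ)³ with multiplication (a,b,c)(a',b',c') = (a+a', b+b', c+c'+ab')) with center N ≅ ℤ/nℤ generated by z := (0,0,1). Suppose k contains a primitive n-th root of unity ζ, and let V_ζ be an irreducible finite-dimensional k-representation of G on which z acts by the scalar ζ. Then the natural k-algebra homomorphism k[G] → End_k(V_ζ) is surjective and its kernel is the two-sided ideal I_ζ of k[G] generated by the element z − ζ·1; hence it induces a k-algebra isomorphism k[G]/I_ζ ≅ End_k(V_ζ). -/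
namespace Heis

variable {n : ℕ}

def x : Heis n := ⟨1, 0, 0⟩
def y : Heis n := ⟨0, 1, 0⟩
def z : Heis n := ⟨0, 0, 1⟩

lemma x_pow (m : ℕ) : (x : Heis n) ^ m = ⟨m, 0, 0⟩ := by
  induction m with
  | zero => ext <;> simp
  | succ m ih => rw [pow_succ, ih]; ext <;> simp [x]

lemma y_pow (m : ℕ) : (y : Heis n) ^ m = ⟨0, m, 0⟩ := by
  induction m with
  | zero => ext <;> simp
  | succ m ih => rw [pow_succ, ih]; ext <;> simp [y]

lemma z_pow (m : ℕ) : (z : Heis n) ^ m = ⟨0, 0, m⟩ := by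
  induction m with
  | zero => ext <;> simp
  | succ m ih => rw [pow_succ, ih]; ext <;> simp [z]

lemma x_pow_self : (x : Heis n) ^ n = 1 := by
  rw [x_pow, ZMod.natCast_self]
  rfl

lemma y_pow_self : (y : Heis n) ^ n = 1 := by
  rw [y_pow, ZMod.natCast_self]
  rfl

lemma x_mul_y : (x : Heis n) * y = z * (y * x) := by
  ext <;> simp [x, y, z]

lemma z_pow_val_mul [NeZero n] (a b c : ZMod n) :
    (z : Heis n) ^ c.val * ⟨a, b, 0⟩ = ⟨a, b, c⟩ := by
  ext <;> simp [z_pow]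

lemma mk_eq_z_pow_mul_x_pow_mul_y_pow [NeZero n] (a b c : ZMod n) :
    (⟨a, b, c⟩ : Heis n) = z ^ (c - a * b).val * (x ^ a.val * y ^ b.val) := by
  ext <;> simp [x_pow, y_pow, z_pow]

lemma closure_x_y_z [NeZero n] : Submonoid.closure {(x : Heis n), y, z} = ⊤ := by
  refine eq_top_iff.2 fun ⟨a, b, c⟩ _ => ?_
  rw [mk_eq_z_pow_mul_x_pow_mul_y_pow]
  have mem (g) (hg : g ∈ ({x, y, z} : Set (Heis n))) := Submonoid.subset_closure hg
  exact mul_mem (pow_mem (mem z (by simp)) _)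
    (mul_mem (pow_mem (mem x (by simp)) _) (pow_mem (mem y (by simp)) _))

end Heis

lemma pow_zmod_val_add {M : Type*} [Monoid M] {n : ℕ} [NeZero n] {g : M} (hg : g ^ n = 1)
    (i j : ZMod n) : g ^ (i + j).val = g ^ i.val * g ^ j.val := by
  rw [ZMod.val_add, ← pow_eq_pow_mod _ hg, pow_add]

lemma mul_pow_eq_smul_pow_mul {R A : Type*} [CommSemiring R] [Semiring A] [Algebra R A]
    {X Y : A} {ζ : R} (h : X * Y = ζ • (Y * X)) (m : ℕ) :
    X * Y ^ m = ζ ^ m • (Y ^ m * X) := by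
  induction m with
  | zero => simp
  | succ m ih =>
    rw [pow_succ, ← mul_assoc, ih, smul_mul_assoc, mul_assoc, h, mul_smul_comm, smul_smul,
      ← mul_assoc, ← pow_succ, pow_succ]

lemma Subalgebra.eq_top_of_toLin_single_mem {K V ι : Type*} [Field K] [AddCommGroup V]
    [Module K V] [Fintype ι] [DecidableEq ι] (S : Subalgebra K (Module.End K V))
    (b : Module.Basis ι K V) (h : ∀ i j, Matrix.toLin b b (Matrix.single i j 1) ∈ S) :
    S = ⊤ := by
  refine eq_top_iff.2 fun T _ => ?_
  rw [← Matrix.toLin_toMatrix b b T, Matrix.matrix_eq_sum_single (LinearMap.toMatrix b b T)]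
  simp only [map_sum]
  refine Subalgebra.sum_mem _ fun i _ => Subalgebra.sum_mem _ fun j _ => ?_
  rw [← mul_one (LinearMap.toMatrix b b T i j), ← smul_eq_mul, ← Matrix.smul_single, map_smul]
  exact S.smul_mem (h i j) _

namespace Module.End

variable {K V : Type*} [Field K] [AddCommGroup V] [Module K V]

lemma exists_aeval_apply_eq_ite {ι : Type*} [Fintype ι] [DecidableEq ι] {f : End K V}
    {b : ι → V} {μ : ι → K} (hμ : Function.Injective μ)
    (hb : ∀ i, f.HasEigenvector (μ i) (b i)) (i : ι) :
    ∃ p : Polynomial K, ∀ l, Polynomial.aeval f p (b l) = if l = i then b i else 0 := by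
  refine ⟨Lagrange.basis Finset.univ μ i, fun l => ?_⟩
  rw [aeval_apply_of_hasEigenvector (hb l)]
  split_ifs with h
  · rw [h, Lagrange.eval_basis_self hμ.injOn (Finset.mem_univ _), one_smul]
  · rw [Lagrange.eval_basis_of_ne (Ne.symm h) (Finset.mem_univ _), zero_smul]

lemma exists_hasEigenvector_of_pow_eq_one [FiniteDimensional K V] [Nontrivial V] {n : ℕ}
    (hn : 0 < n) {ζ : K} (hζ : IsPrimitiveRoot ζ n) {f : End K V} (hf : f ^ n = 1) :
    ∃ μ v, μ ≠ 0 ∧ f.HasEigenvector μ v := by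
  have hdvd : minpoly K f ∣ Polynomial.X ^ n - Polynomial.C 1 := minpoly.dvd _ _ (by simp [hf])
  have hne : (Polynomial.X ^ n - Polynomial.C 1 : Polynomial K) ≠ 0 :=
    (Polynomial.monic_X_pow_sub_C 1 hn.ne').ne_zero
  obtain ⟨μ, hμ⟩ :=
    ((Polynomial.X_pow_sub_one_splits hζ).of_dvd hne hdvd).exists_eval_eq_zero
      (minpoly.degree_pos (Algebra.IsIntegral.isIntegral f)).ne'
  obtain ⟨v, hv⟩ := (hasEigenvalue_of_isRoot hμ).exists_hasEigenvector
  refine ⟨μ, v, fun hμ0 => hv.2 ?_, hv⟩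
  simpa [hμ0, zero_pow hn.ne', hf] using hv.pow_apply n

end Module.End

section CommutationRelation

variable {K V : Type*} [Field K] [AddCommGroup V] [Module K V] {n : ℕ} [NeZero n] {ζ : K}
  {X Y : Module.End K V} {μ : K} {v : V}

lemma IsPrimitiveRoot.injective_pow_zmod_val_mul (hζ : IsPrimitiveRoot ζ n) (hμ : μ ≠ 0) :
    Function.Injective fun j : ZMod n => ζ ^ j.val * μ := fun i j hij =>
  ZMod.val_injective n (hζ.pow_inj (ZMod.val_lt i) (ZMod.val_lt j) (mul_right_cancel₀ hμ hij))

lemma Module.End.HasEigenvector.pow_apply_of_mul_eq_smul (hXY : X * Y = ζ • (Y * X))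
    (hY : IsUnit Y) (hv : X.HasEigenvector μ v) (m : ℕ) :
    X.HasEigenvector (ζ ^ m * μ) ((Y ^ m) v) := by
  refine ⟨Module.End.mem_eigenspace_iff.2 ?_, fun h => hv.2 ?_⟩
  · rw [← Module.End.mul_apply, mul_pow_eq_smul_pow_mul hXY, LinearMap.smul_apply,
      Module.End.mul_apply, hv.apply_eq_smul, map_smul, smul_smul]
  · exact ((Module.End.isUnit_iff _).1 (hY.pow m)).1 (by rw [h, map_zero])

variable (hζ : IsPrimitiveRoot ζ n) (hXY : X * Y = ζ • (Y * X)) (hY : Y ^ n = 1)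
  (hv : X.HasEigenvector μ v) (hμ : μ ≠ 0)
include hζ hXY hY hv hμ

lemma linearIndependent_pow_zmod_val_apply :
    LinearIndependent K fun j : ZMod n => (Y ^ j.val) v :=
  X.eigenvectors_linearIndependent' _ (hζ.injective_pow_zmod_val_mul hμ) _ fun j =>
    hv.pow_apply_of_mul_eq_smul hXY (IsUnit.of_pow_eq_one hY (NeZero.ne n)) j.val

lemma adjoin_eq_top_of_span_pow_zmod_val_apply_eq_top
    (hspan : Submodule.span K (Set.range fun j : ZMod n => (Y ^ j.val) v) = ⊤) :
    Algebra.adjoin K {X, Y} = ⊤ := by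
  classical
  let b := Module.Basis.mk (linearIndependent_pow_zmod_val_apply hζ hXY hY hv hμ) hspan.ge
  have hb (j : ZMod n) : b j = (Y ^ j.val) v := Module.Basis.mk_apply _ _ _
  have hYb (m j : ZMod n) : (Y ^ m.val) (b j) = b (j + m) := by
    rw [hb, hb, ← Module.End.mul_apply, pow_zmod_val_add hY, pow_mul_comm]
  obtain ⟨p, hp⟩ := Module.End.exists_aeval_apply_eq_ite (hζ.injective_pow_zmod_val_mul hμ)
    (fun j => hb j ▸ hv.pow_apply_of_mul_eq_smul hXY (IsUnit.of_pow_eq_one hY (NeZero.ne n)) _) 0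
  refine Subalgebra.eq_top_of_toLin_single_mem _ b fun i j => ?_
  have hE : Matrix.toLin b b (Matrix.single i j 1) =
      Y ^ i.val * Polynomial.aeval X p * Y ^ (-j).val := by
    refine b.ext fun l => ?_
    rw [Matrix.toLin_self, Module.End.mul_apply, Module.End.mul_apply, hYb, hp,
      ← sub_eq_add_neg]
    split_ifs with h
    · simp [hYb, sub_eq_zero.1 h, Matrix.single_apply]
    · simp [Ne.symm (sub_ne_zero.1 h)]
  rw [hE]
  have hX : X ∈ Algebra.adjoin K {X, Y} := Algebra.subset_adjoin (by simp)
  have hY : Y ∈ Algebra.adjoin K {X, Y} := Algebra.subset_adjoin (by simp)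
  exact mul_mem (mul_mem (pow_mem hY _)
    (Algebra.adjoin_mono (by simp) (Polynomial.aeval_mem_adjoin_singleton _ _))) (pow_mem hY _)

end CommutationRelation

lemma IrredRep.eq_top_of_closure_eq_top {k G V : Type} [CommRing k] [Monoid G] [AddCommGroup V]
    [Module k V] {ρ : Representation k G V} (hρ : IrredRep ρ) {s : Set G}
    (hs : Submonoid.closure s = ⊤) {p : Submodule k V} (hp : p ≠ ⊥)
    (hinv : ∀ g ∈ s, ∀ v ∈ p, ρ g v ∈ p) : p = ⊤ := by
  let stab : Submonoid G :=
    { carrier := {g | ∀ v ∈ p, ρ g v ∈ p}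
      one_mem' := fun v hv => by rwa [map_one, Module.End.one_apply]
      mul_mem' := fun hg hh v hv => by rw [map_mul, Module.End.mul_apply]; exact hg _ (hh v hv) }
  have hstab : ⊤ ≤ stab := hs ▸ Submonoid.closure_le.2 hinv
  exact (hρ.2 p fun g => hstab trivial).resolve_left hp

lemma TwoSidedIdeal.pow_sub_pow_mem {R : Type*} [Ring R] {I : TwoSidedIdeal R} {a b : R}
    (hab : Commute a b) (h : a - b ∈ I) (m : ℕ) : a ^ m - b ^ m ∈ I :=
  hab.geom_sum₂_mul m ▸ I.mul_mem_left _ _ h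

lemma TwoSidedIdeal.ker_eq_of_forall_exists_sub_mem {K A B ι : Type*} [Field K] [Ring A]
    [Algebra K A] [Ring B] [Algebra K B] [FiniteDimensional K B] [Fintype ι] {φ : A →ₐ[K] B}
    (hφ : Function.Surjective φ) {I : TwoSidedIdeal A} (hI : I ≤ TwoSidedIdeal.ker φ.toRingHom)
    (w : ι → A) (hw : Fintype.card ι ≤ Module.finrank K B)
    (hwI : ∀ a, ∃ u ∈ Submodule.span K (Set.range w), a - u ∈ I) :
    TwoSidedIdeal.ker φ.toRingHom = I := by
  set W := Submodule.span K (Set.range w)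
  have : FiniteDimensional K W := FiniteDimensional.span_of_finite K (Set.finite_range w)
  have hφI {a} (ha : a ∈ I) : φ a = 0 := (TwoSidedIdeal.mem_ker _).1 (hI ha)
  have hsurj : Function.Surjective (φ.toLinearMap ∘ₗ W.subtype) := fun b => by
    obtain ⟨a, rfl⟩ := hφ b
    obtain ⟨u, hu, hau⟩ := hwI a
    have h := hφI hau
    rw [map_sub, sub_eq_zero] at h
    exact ⟨⟨u, hu⟩, h.symm⟩
  have hinj := (OrzechProperty.bijective_of_surjective_of_finrank_le _ hsurj
    ((finrank_range_le_card w).trans hw)).1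
  refine le_antisymm (fun a ha => ?_) hI
  obtain ⟨u, hu, hau⟩ := hwI a
  have h := hφI hau
  rw [map_sub, show φ a = 0 from (TwoSidedIdeal.mem_ker _).1 ha, zero_sub, neg_eq_zero] at h
  have hu0 : (⟨u, hu⟩ : W) = 0 := hinj (by simpa using h)
  simpa [show u = 0 from congrArg Subtype.val hu0] using hau

namespace Heis

variable {K V : Type} [Field K] [AddCommGroup V] [Module K V] {n : ℕ} {ζ : K}
  {ρ : Representation K (Heis n) V}

lemma rep_x_mul_rep_y (hz : ρ z = ζ • LinearMap.id) : ρ x * ρ y = ζ • (ρ y * ρ x) := by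
  rw [← map_mul, x_mul_y, map_mul, hz, smul_mul_assoc, map_mul]
  rfl

lemma rep_x_pow_self : ρ x ^ n = 1 := by
  rw [← map_pow, x_pow_self, map_one]

lemma rep_y_pow_self : ρ y ^ n = 1 := by
  rw [← map_pow, y_pow_self, map_one]

variable [NeZero n] [FiniteDimensional K V] (hζ : IsPrimitiveRoot ζ n) (hirr : IrredRep ρ)
  (hz : ρ z = ζ • LinearMap.id)
include hζ hirr hz

lemma exists_hasEigenvector_span_eq_top :
    ∃ (μ : K) (v : V), μ ≠ 0 ∧ Module.End.HasEigenvector (ρ x) μ v ∧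
      Submodule.span K (Set.range fun j : ZMod n => (ρ y ^ j.val) v) = ⊤ := by
  have := hirr.1
  obtain ⟨μ, v, hμ, hv⟩ := Module.End.exists_hasEigenvector_of_pow_eq_one (NeZero.pos n) hζ
    (rep_x_pow_self (ρ := ρ))
  set P := Submodule.span K (Set.range fun j : ZMod n => (ρ y ^ j.val) v)
  have hmem (m : ℕ) : (ρ y ^ m) v ∈ P := by
    rw [pow_eq_pow_mod m rep_y_pow_self, ← ZMod.val_natCast]
    exact Submodule.subset_span ⟨_, rfl⟩
  have hinv (f : Module.End K V) (hf : ∀ j : ZMod n, f ((ρ y ^ j.val) v) ∈ P) :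
      ∀ u ∈ P, f u ∈ P := fun u hu =>
    (Submodule.span_le (p := P.comap f)).2 (Set.range_subset_iff.2 hf) hu
  refine ⟨μ, v, hμ, hv, hirr.eq_top_of_closure_eq_top closure_x_y_z ?_ ?_⟩
  · exact (Submodule.ne_bot_iff P).2 ⟨v, by simpa using hmem 0, hv.2⟩
  rintro g (rfl | rfl | rfl) <;> refine hinv _ fun j => ?_
  · rw [((hv.pow_apply_of_mul_eq_smul (rep_x_mul_rep_y hz)
      (IsUnit.of_pow_eq_one rep_y_pow_self (NeZero.ne n))) _).apply_eq_smul]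
    exact P.smul_mem _ (hmem _)
  · rw [← Module.End.mul_apply, ← pow_succ']
    exact hmem _
  · rw [hz]
    exact P.smul_mem _ (hmem _)

lemma finrank_eq_of_irredRep : Module.finrank K V = n := by
  obtain ⟨μ, v, hμ, hv, hspan⟩ := exists_hasEigenvector_span_eq_top hζ hirr hz
  rw [← finrank_top, ← hspan, finrank_span_eq_card (linearIndependent_pow_zmod_val_apply hζ
    (rep_x_mul_rep_y hz) rep_y_pow_self hv hμ), ZMod.card]

lemma surjective_asAlgebraHom : Function.Surjective (Representation.asAlgebraHom ρ) := by
  obtain ⟨μ, v, hμ, hv, hspan⟩ := exists_hasEigenvector_span_eq_top hζ hirr hz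
  have htop := adjoin_eq_top_of_span_pow_zmod_val_apply_eq_top hζ (rep_x_mul_rep_y hz)
    rep_y_pow_self hv hμ hspan
  have hle : Algebra.adjoin K {ρ x, ρ y} ≤ (Representation.asAlgebraHom ρ).range :=
    Algebra.adjoin_le (by
      rintro _ (rfl | rfl) <;>
        exact ⟨MonoidAlgebra.of K _ _, Representation.asAlgebraHom_of _ _⟩)
  exact fun T => hle (htop ▸ Algebra.mem_top)

end Heis

lemma Heis.exists_mem_span_sub_mem_span {K : Type*} [Field K] {n : ℕ} [NeZero n] (ζ : K)
    (f : MonoidAlgebra K (Heis n)) :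
    ∃ u ∈ Submodule.span K
        (Set.range fun p : ZMod n × ZMod n => MonoidAlgebra.of K (Heis n) ⟨p.1, p.2, 0⟩),
      f - u ∈ TwoSidedIdeal.span {MonoidAlgebra.of K (Heis n) Heis.z - algebraMap K _ ζ} := by
  set I := TwoSidedIdeal.span {MonoidAlgebra.of K (Heis n) Heis.z - algebraMap K _ ζ}
  have hsmul (c : K) {f} (hf : f ∈ I) : c • f ∈ I := by
    rw [Algebra.smul_def]
    exact I.mul_mem_left _ _ hf
  induction f using MonoidAlgebra.induction_on with
  | of g =>
    refine ⟨ζ ^ g.c.val • MonoidAlgebra.of K _ ⟨g.a, g.b, 0⟩,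
      Submodule.smul_mem _ _ (Submodule.subset_span ⟨(g.a, g.b), rfl⟩), ?_⟩
    have hzpow := I.pow_sub_pow_mem (Algebra.commutes ζ _).symm (TwoSidedIdeal.subset_span rfl)
      g.c.val
    convert I.mul_mem_right _ (MonoidAlgebra.of K _ ⟨g.a, g.b, 0⟩) hzpow using 1
    rw [sub_mul, ← map_pow, ← map_mul, Heis.z_pow_val_mul, ← map_pow, Algebra.smul_def]
  | add f g hf hg =>
    obtain ⟨u, hu, hfu⟩ := hf
    obtain ⟨u', hu', hgu⟩ := hg
    exact ⟨u + u', add_mem hu hu', add_sub_add_comm f g u u' ▸ I.add_mem hfu hgu⟩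
  | smul c f hf =>
    obtain ⟨u, hu, hfu⟩ := hf
    exact ⟨c • u, Submodule.smul_mem _ _ hu, smul_sub c f u ▸ hsmul c hfu⟩

theorem stmt_9_general (k : Type) [Field k] (n : ℕ) (hn : 0 < n)
    (ζ : k) (hζ : IsPrimitiveRoot ζ n)
    (V : FDRep k (Heis n)) (hirr : IrredRep V.ρ)
    (hz : V.ρ ⟨0, 0, 1⟩ = ζ • LinearMap.id) :
    Function.Surjective (Representation.asAlgebraHom V.ρ) ∧
      TwoSidedIdeal.ker (Representation.asAlgebraHom V.ρ).toRingHom =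
        TwoSidedIdeal.span
          {MonoidAlgebra.of k (Heis n) ⟨0, 0, 1⟩ - algebraMap k (MonoidAlgebra k (Heis n)) ζ} := by
  have : NeZero n := ⟨hn.ne'⟩
  have hsurj := Heis.surjective_asAlgebraHom hζ hirr hz
  refine ⟨hsurj, TwoSidedIdeal.ker_eq_of_forall_exists_sub_mem hsurj ?_ _ ?_
    (Heis.exists_mem_span_sub_mem_span ζ)⟩
  · rw [TwoSidedIdeal.span_le, Set.singleton_subset_iff, SetLike.mem_coe, TwoSidedIdeal.mem_ker]
    simp [hz, Module.End.one_eq_id]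
  · rw [Module.finrank_linearMap, Heis.finrank_eq_of_irredRep hζ hirr hz, Fintype.card_prod,
      ZMod.card]

/-- Let `G` be the Heisenberg group over `ℤ/nℤ` with central generator
`z = (0,0,1)`, let `ζ ∈ k` be a primitive `n`-th root of unity, and let `V_ζ` be an
irreducible finite-dimensional representation of `G` on which `z` acts by the scalar `ζ`.
Then the natural algebra map `k[G] → End_k(V_ζ)` is surjective, and its kernel is the
two-sided ideal generated by `z - ζ·1`; hence `k[G]/I_ζ ≅ End_k(V_ζ)`. -/
theorem stmt_9 (k : Type) [Field k] [CharZero k] (n : ℕ) (hn : 0 < n)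
    (ζ : k) (hζ : IsPrimitiveRoot ζ n)
    (V : FDRep k (Heis n)) (hirr : IrredRep V.ρ)
    (hz : V.ρ ⟨0, 0, 1⟩ = ζ • LinearMap.id) :
    Function.Surjective (Representation.asAlgebraHom V.ρ) ∧
      TwoSidedIdeal.ker (Representation.asAlgebraHom V.ρ).toRingHom =
        TwoSidedIdeal.span
          {MonoidAlgebra.of k (Heis n) ⟨0, 0, 1⟩ - algebraMap k (MonoidAlgebra k (Heis n)) ζ} :=
  stmt_9_general k n hn ζ hζ V hirr hz
end

section
/- Let n = n_1·1 + n_2·2 + ⋯ + n_r·r with n_i ≥ 0, and fix a partition of {1,…,n} into n_1 blocks of size 1, n_2 blocks of size 2, …, n_r blocks of size r. Let N ≤ Σ_n be the subgroup of permutations stabilizing each block setwise, so N ≅ (Σ_1)^{n_1} × (Σ_2)^{n_2} × ⋯ × (Σ_r)^{n_r}, and let H ≤ Σ_n be the subgroup, isomorphic to Σ_{n_1} × ⋯ × Σ_{n_r}, of permutations that permute the blocks of each given size among themselves via fixed order-preserving identifications of blocks of equal size. Then the normalizer of N in Σ_n is generated by N and H, N ∩ H is trivial, and this normalizer is the internal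 semidirect product N ⋊ H. -/
open Equiv

variable {r : ℕ} {ns : Fin r → ℕ}

/-- The ground set: a point is a triple `(s, j, p)` where `s` records the block size `s+1`,
`j` indexes the blocks of that size, and `p` is a position inside the block. -/
abbrev GroundSet (ns : Fin r → ℕ) : Type := Σ s : Fin r, Fin (ns s) × Fin (s.1 + 1)

/-- The homomorphism embedding the product of the symmetric groups of the blocks,
acting inside each block. -/
def blockDiag (ns : Fin r → ℕ) :
    (∀ s : Fin r, Fin (ns s) → Equiv.Perm (Fin (s.1 + 1))) →* Equiv.Perm (GroundSet ns) where
  toFun f := Equiv.sigmaCongrRight fun s => Equiv.prodShear (Equiv.refl _) (f s)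
  map_one' := by
    ext ⟨s, j, p⟩ <;> rfl
  map_mul' f g := by
    ext ⟨s, j, p⟩ <;> rfl

/-- The homomorphism embedding `Σ_{n_1} × ⋯ × Σ_{n_r}`, permuting the blocks of each given
size among themselves via the order-preserving identifications of blocks of equal size. -/
def blockPerm (ns : Fin r → ℕ) :
    (∀ s : Fin r, Equiv.Perm (Fin (ns s))) →* Equiv.Perm (GroundSet ns) where
  toFun τ := Equiv.sigmaCongrRight fun s => Equiv.prodCongr (τ s) (Equiv.refl _)
  map_one' := by
    ext ⟨s, j, p⟩ <;> rfl
  map_mul' τ τ' := by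
    ext ⟨s, j, p⟩ <;> rfl

/-!
The blocks are exactly the orbits of `N`, so a permutation `g` normalizing `N` maps blocks to
blocks: for `x, y` in one block, `swap x y ∈ N` and `g * swap x y * g⁻¹ = swap (g x) (g y)`.
Being a bijection, `g` then maps each block onto a block of the same size, so the induced
permutation of blocks is some `blockPerm τ`, and `g * (blockPerm τ)⁻¹` fixes every block, i.e.
lies in `N`. Conversely every `blockPerm τ` permutes the blocks and hence normalizes `N`, and
an element `blockPerm τ` of `N` keeps every point in its block, which forces `τ = 1`.
-/

namespace Equiv.Perm

variable {α : Type*}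

theorem exists_sigmaCongrRight_eq {β : α → Type*} (σ : Perm (Σ a, β a))
    (hσ : ∀ x, (σ x).1 = x.1) : ∃ F : ∀ a, Perm (β a), Equiv.sigmaCongrRight F = σ := by
  have fiberwise : ∀ τ : (Σ a, β a) ≃ (Σ a, β a), (∀ x, (τ x).1 = x.1) →
      ∀ a b, ∃ b', τ ⟨a, b⟩ = ⟨a, b'⟩ := by
    intro τ hτ a b
    have h := hτ ⟨a, b⟩
    generalize τ ⟨a, b⟩ = y at h ⊢
    obtain ⟨a', b'⟩ := y
    cases h
    exact ⟨b', rfl⟩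
  have hσsymm : ∀ x, (σ.symm x).1 = x.1 := fun x => by simpa using (hσ (σ.symm x)).symm
  choose f hf using fiberwise σ hσ
  choose f' hf' using fiberwise σ.symm hσsymm
  refine ⟨fun a => ⟨f a, f' a, fun b => ?_, fun b => ?_⟩, Equiv.ext fun ⟨a, b⟩ => (hf a b).symm⟩
  · have h := hf' a (f a b)
    rw [← hf, symm_apply_apply] at h
    exact (sigma_mk_injective h).symm
  · have h := hf a (f' a b)
    rw [← hf', apply_symm_apply] at h
    exact (sigma_mk_injective h).symm

theorem exists_prodShear_eq {β : Type*} (σ : Perm (α × β)) (hσ : ∀ x, (σ x).1 = x.1) :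
    ∃ F : α → Perm β, prodShear (Equiv.refl α) F = σ := by
  have hσsymm : ∀ x, (σ.symm x).1 = x.1 := fun x => by simpa using (hσ (σ.symm x)).symm
  have fiberwise : ∀ τ : α × β ≃ α × β, (∀ x, (τ x).1 = x.1) →
      ∀ a b, τ (a, b) = (a, (τ (a, b)).2) := fun τ hτ a b => Prod.ext (hτ (a, b)) rfl
  refine ⟨fun a => ⟨fun b => (σ (a, b)).2, fun b => (σ.symm (a, b)).2, fun b => ?_, fun b => ?_⟩,
    Equiv.ext fun ⟨a, b⟩ => (fiberwise σ hσ a b).symm⟩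
  · simp only [← fiberwise σ hσ, symm_apply_apply]
  · simp only [← fiberwise σ.symm hσsymm, apply_symm_apply]

end Equiv.Perm

namespace GroundSet

def block (x : GroundSet ns) : Σ s : Fin r, Fin (ns s) := ⟨x.1, x.2.1⟩

def basePoint (b : Σ s : Fin r, Fin (ns s)) : GroundSet ns := ⟨b.1, b.2, 0⟩

@[simp]
theorem block_basePoint (b : Σ s : Fin r, Fin (ns s)) : (basePoint b).block = b := rfl

theorem card_block_fiber (b : Σ s : Fin r, Fin (ns s)) :
    Fintype.card {x : GroundSet ns // x.block = b} = b.1 + 1 := by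
  rw [← Fintype.card_fin (b.1 + 1)]
  refine (Fintype.card_of_bijective (f := fun p => ⟨⟨b.1, b.2, p⟩, rfl⟩) ⟨?_, ?_⟩).symm
  · intro p q h
    simpa [Subtype.ext_iff] using h
  · rintro ⟨⟨s, j, p⟩, rfl⟩
    exact ⟨p, rfl⟩

end GroundSet

open GroundSet

theorem block_blockPerm (τ : ∀ s : Fin r, Perm (Fin (ns s))) (x : GroundSet ns) :
    (blockPerm ns τ x).block = Equiv.sigmaCongrRight τ x.block := rfl

theorem mem_range_blockDiag_iff {a : Perm (GroundSet ns)} :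
    a ∈ (blockDiag ns).range ↔ ∀ x, (a x).block = x.block := by
  refine ⟨by rintro ⟨f, rfl⟩ x; rfl, fun ha => ?_⟩
  obtain ⟨F, rfl⟩ := Perm.exists_sigmaCongrRight_eq a fun x => (congrArg Sigma.fst (ha x) :)
  have hF : ∀ s x, (F s x).1 = x.1 := fun s x => sigma_mk_injective (i := s) (ha ⟨s, x⟩)
  choose f hf using fun s => Perm.exists_prodShear_eq (F s) (hF s)
  exact ⟨f, by simp only [blockDiag, MonoidHom.coe_mk, OneHom.coe_mk, hf]⟩

theorem block_apply_eq_of_mem_normalizer {g : Perm (GroundSet ns)}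
    (hg : g ∈ Subgroup.normalizer (blockDiag ns).range) {x y : GroundSet ns}
    (h : x.block = y.block) : (g x).block = (g y).block := by
  have hswap : swap x y ∈ (blockDiag ns).range := mem_range_blockDiag_iff.mpr fun z => by
    rcases eq_or_ne z x with rfl | hzx
    · rw [swap_apply_left]; exact h.symm
    rcases eq_or_ne z y with rfl | hzy
    · rw [swap_apply_right]; exact h
    rw [swap_apply_of_ne_of_ne hzx hzy]
  have hconj : swap (g x) (g y) ∈ (blockDiag ns).range := by
    rw [swap_apply_apply]
    exact (Subgroup.mem_normalizer_iff.mp hg _).mp hswap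
  simpa using (mem_range_blockDiag_iff.mp hconj (g x)).symm

theorem exists_blockMap_of_mem_normalizer {g : Perm (GroundSet ns)}
    (hg : g ∈ Subgroup.normalizer (blockDiag ns).range) :
    ∃ β : Perm (Σ s : Fin r, Fin (ns s)), ∀ x, (g x).block = β x.block := by
  have hg' := Subgroup.inv_mem _ hg
  refine ⟨⟨fun b => (g (basePoint b)).block, fun b => (g⁻¹ (basePoint b)).block, fun b => ?_,
    fun b => ?_⟩, fun x => block_apply_eq_of_mem_normalizer hg rfl⟩
  · calc (g⁻¹ (basePoint (g (basePoint b)).block)).block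
        _ = (g⁻¹ (g (basePoint b))).block := block_apply_eq_of_mem_normalizer hg' rfl
        _ = b := by simp
  · calc (g (basePoint (g⁻¹ (basePoint b)).block)).block
        _ = (g (g⁻¹ (basePoint b))).block := block_apply_eq_of_mem_normalizer hg rfl
        _ = b := by simp

theorem fst_blockMap {g : Perm (GroundSet ns)} {β : Perm (Σ s : Fin r, Fin (ns s))}
    (hβ : ∀ x, (g x).block = β x.block) (b : Σ s : Fin r, Fin (ns s)) : (β b).1 = b.1 := by
  have hcard := Fintype.card_congr (g.subtypeEquiv (p := (·.block = b)) (q := (·.block = β b))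
    fun x => by rw [hβ, β.injective.eq_iff])
  rw [card_block_fiber, card_block_fiber] at hcard
  exact Fin.ext (by omega)

theorem exists_mul_eq_of_mem_normalizer {g : Perm (GroundSet ns)}
    (hg : g ∈ Subgroup.normalizer (blockDiag ns).range) :
    ∃ a ∈ (blockDiag ns).range, ∃ b ∈ (blockPerm ns).range, g = a * b := by
  obtain ⟨β, hβ⟩ := exists_blockMap_of_mem_normalizer hg
  obtain ⟨τ, rfl⟩ := Perm.exists_sigmaCongrRight_eq β (fst_blockMap hβ)
  refine ⟨g * (blockPerm ns τ)⁻¹, mem_range_blockDiag_iff.mpr fun x => ?_, blockPerm ns τ,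
    ⟨τ, rfl⟩, by group⟩
  rw [Perm.mul_apply, hβ, ← block_blockPerm, Perm.coe_inv, apply_symm_apply]

theorem range_blockPerm_le_normalizer :
    (blockPerm ns).range ≤ Subgroup.normalizer (blockDiag ns).range := by
  rintro _ ⟨τ, rfl⟩
  refine Subgroup.mem_normalizer_iff.mpr fun a => ?_
  rw [mem_range_blockDiag_iff, mem_range_blockDiag_iff]
  conv_rhs => rw [← (blockPerm ns τ).forall_congr_right]
  simp only [Perm.mul_apply, Perm.coe_inv, symm_apply_apply, block_blockPerm,
    (sigmaCongrRight τ).injective.eq_iff]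

theorem range_blockDiag_inf_range_blockPerm :
    (blockDiag ns).range ⊓ (blockPerm ns).range = ⊥ := by
  refine (Subgroup.eq_bot_iff_forall _).mpr ?_
  rintro _ ⟨⟨f, hf⟩, τ, rfl⟩
  have hτ : τ = 1 := by
    funext s
    ext j : 1
    exact (sigma_mk_injective (i := s) (congrArg block (DFunLike.congr_fun hf ⟨s, j, 0⟩))).symm
  rw [hτ, map_one]

theorem stmt_16_general (r : ℕ) (ns : Fin r → ℕ)
    (N H : Subgroup (Equiv.Perm (GroundSet ns)))
    (hN : N = (blockDiag ns).range) (hH : H = (blockPerm ns).range) :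
    Subgroup.normalizer N = N ⊔ H ∧ N ⊓ H = ⊥ ∧
      ∀ g ∈ Subgroup.normalizer N, ∃ a ∈ N, ∃ b ∈ H, g = a * b := by
  subst hN hH
  refine ⟨le_antisymm (fun g hg => ?_)
      (sup_le Subgroup.le_normalizer range_blockPerm_le_normalizer),
    range_blockDiag_inf_range_blockPerm, fun g hg => exists_mul_eq_of_mem_normalizer hg⟩
  obtain ⟨a, ha, b, hb, rfl⟩ := exists_mul_eq_of_mem_normalizer hg
  exact mul_mem (Subgroup.mem_sup_left ha) (Subgroup.mem_sup_right hb)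

/-- Let `n = n_1·1 + ⋯ + n_r·r` and fix a partition of a set of `n`
elements into `n_i` blocks of size `i`.  Let `N` be the subgroup of the symmetric group
stabilizing each block setwise (so `N ≅ Σ_1^{n_1} × ⋯ × Σ_r^{n_r}`) and `H ≅ Σ_{n_1} × ⋯ ×
Σ_{n_r}` the subgroup permuting blocks of equal size via order-preserving identifications.
Then the normalizer of `N` is generated by `N` and `H`, meets `H` trivially along `N`, and is
the internal semidirect product `N ⋊ H`. -/
theorem stmt_16 (n r : ℕ) (ns : Fin r → ℕ)
    (hn : ∑ s : Fin r, ns s * (s.1 + 1) = n)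
    (N H : Subgroup (Equiv.Perm (GroundSet ns)))
    (hN : N = (blockDiag ns).range) (hH : H = (blockPerm ns).range) :
    Subgroup.normalizer N = N ⊔ H ∧ N ⊓ H = ⊥ ∧
      ∀ g ∈ Subgroup.normalizer N, ∃ a ∈ N, ∃ b ∈ H, g = a * b :=
  stmt_16_general r ns N H hN hH
end
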